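/- arXiv:1602.08073 — 4 statements merged into one kernel-verified Lean document; each statement's English description precedes it below -/
import Mathlib

section
/- For odd n ≥ 3, the permutations τ_3, τ_5, …, τ_n generate the alternating group A_n. -/
/-!
Write `σ` for the `n`-cycle `finRotate n = τ_n⁻¹` and `s` for the transposition `(0 1)`.
Then `s σ s = (0 1 2) σ = τ₃⁻¹ τ_n⁻¹`, so the `τ_k` generate `K = ⟨σ, s σ s⟩`, which lies in
`A_n` because `n` is odd. Conjugation by `s` swaps the two generators of `K`, so `s` normalises
`K` and `⟨σ, s⟩ = K ∪ K s`. Since `⟨σ, s⟩ = S_n` and `K s` consists of odd permutations, `K = A_n`.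
-/

/-- `tau n k` is the permutation of positions `{1,…,n}` (0-indexed as `Fin n`) with
`τ_k(1)=k`, `τ_k(i)=i-1` for `2 ≤ i ≤ k`, and `τ_k(i)=i` for `i > k`. -/
def tau (n k : ℕ) : Equiv.Perm (Fin n) :=
  if h : k - 1 < n then (Fin.cycleRange ⟨k - 1, h⟩)⁻¹ else 1

open Equiv Equiv.Perm Subgroup

theorem Subgroup.mul_mul_mem_closure_pair_mul_mul {G : Type*} [Group G] {a s : G}
    (hs : s * s = 1) {k : G} (hk : k ∈ closure ({a, s * a * s} : Set G)) :
    s * k * s ∈ closure ({a, s * a * s} : Set G) := by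
  have hinv : s⁻¹ = s := inv_eq_of_mul_eq_one_right hs
  have hss : ∀ b, s * (s * b) = b := fun b => by rw [← mul_assoc, hs, one_mul]
  suffices closure ({a, s * a * s} : Set G) ≤
      (closure {a, s * a * s}).comap (MulAut.conj s).toMonoidHom by
    simpa [hinv] using this hk
  rw [closure_le, Set.insert_subset_iff, Set.singleton_subset_iff]
  simp only [SetLike.mem_coe, mem_comap, MulEquiv.coe_toMonoidHom, MulAut.conj_apply, hinv]
  constructor
  · exact subset_closure (Set.mem_insert_of_mem _ rfl)
  · rw [show s * (s * a * s) * s = a by simp only [mul_assoc, hs, hss, mul_one]]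
    exact subset_closure (Set.mem_insert a _)

theorem Subgroup.mem_or_mul_mem_of_mem_closure_insert {G : Type*} [Group G] {K : Subgroup G}
    {s : G} (hs : s * s = 1) (hK : ∀ k ∈ K, s * k * s ∈ K) {g : G}
    (hg : g ∈ closure (insert s (K : Set G))) : g ∈ K ∨ g * s ∈ K := by
  have hss : ∀ b, s * (s * b) = b := fun b => by rw [← mul_assoc, hs, one_mul]
  induction hg using closure_induction with
  | mem x hx =>
    rcases hx with rfl | hx
    · exact .inr (hs ▸ K.one_mem)
    · exact .inl hx
  | one => exact .inl K.one_mem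
  | mul x y _ _ hx hy =>
    rcases hx with hx | hx <;> rcases hy with hy | hy
    · exact .inl (K.mul_mem hx hy)
    · exact .inr (by simpa only [mul_assoc] using K.mul_mem hx hy)
    · exact .inr (by simpa only [mul_assoc, hss] using K.mul_mem hx (hK y hy))
    · exact .inl (by simpa only [mul_assoc, hs, hss, mul_one] using K.mul_mem hx (hK _ hy))
  | inv x _ hx =>
    rcases hx with hx | hx
    · exact .inl (K.inv_mem hx)
    · refine .inr ?_
      simpa only [mul_inv_rev, inv_eq_of_mul_eq_one_right hs, mul_assoc, hss] using
        hK _ (K.inv_mem hx)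

namespace Equiv.Perm

variable {α : Type*} [DecidableEq α] [Fintype α]

theorem closure_pair_conj_swap_eq_alternatingGroup {σ s : Perm α} (hσ : sign σ = 1)
    (hs : IsSwap s) (htop : closure ({σ, s} : Set (Perm α)) = ⊤) :
    closure ({σ, s * σ * s} : Set (Perm α)) = alternatingGroup α := by
  obtain ⟨x, y, hxy, rfl⟩ := hs
  have hss : swap x y * swap x y = 1 := swap_mul_self x y
  set K := closure ({σ, swap x y * σ * swap x y} : Set (Perm α))
  have hK_le : K ≤ alternatingGroup α := by
    rw [closure_le, Set.insert_subset_iff, Set.singleton_subset_iff]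
    exact ⟨hσ, by simp [hσ, sign_swap hxy]⟩
  refine le_antisymm hK_le fun g hg => ?_
  have hg_mem : g ∈ closure (insert (swap x y) (K : Set (Perm α))) := by
    refine closure_mono ?_ (htop ▸ mem_top g)
    exact Set.insert_subset_iff.2
      ⟨.inr (subset_closure (.inl rfl)), Set.singleton_subset_iff.2 (.inl rfl)⟩
  refine (mem_or_mul_mem_of_mem_closure_insert hss (fun _ => mul_mul_mem_closure_pair_mul_mul hss)
    hg_mem).resolve_right fun hgs => ?_
  have := hK_le hgs
  rw [mem_alternatingGroup, sign_mul, mem_alternatingGroup.1 hg, sign_swap hxy] at this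
  exact absurd this (by decide)

end Equiv.Perm

theorem Fin.swap_zero_one_mul_swap_one_two (n : ℕ) :
    swap (0 : Fin (n + 3)) 1 * swap 1 2 = cycleRange 2 := by
  ext ⟨j, hj⟩
  have h1 : ((1 : Fin (n + 3)) : ℕ) = 1 := rfl
  have h2 : ((2 : Fin (n + 3)) : ℕ) = 2 := rfl
  simp only [Perm.mul_apply, cycleRange_apply, swap_apply_def, Fin.ext_iff, Fin.lt_def, h1, h2,
    val_zero]
  split_ifs <;> simp_all [val_add, Nat.mod_eq_of_lt]; omega

theorem Fin.swap_zero_one_mul_finRotate_mul_swap (n : ℕ) :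
    swap (0 : Fin (n + 3)) 1 * finRotate (n + 3) * swap 0 1 =
      cycleRange 2 * finRotate (n + 3) := by
  have hconj : finRotate (n + 3) * swap 0 1 * (finRotate (n + 3))⁻¹ = swap 1 2 := by
    rw [← swap_apply_apply, finRotate_apply, finRotate_apply]
    rfl
  rw [← swap_zero_one_mul_swap_one_two, ← hconj]
  group

theorem tau_self_eq_inv_finRotate (m : ℕ) : tau (m + 1) (m + 1) = (finRotate (m + 1))⁻¹ := by
  rw [tau, dif_pos (by omega), ← Fin.cycleRange_last]
  rfl

theorem tau_three (m : ℕ) : tau (m + 3) 3 = (Fin.cycleRange 2)⁻¹ := by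
  rw [tau, dif_pos (by omega)]
  rfl

theorem sign_tau_of_odd {n k : ℕ} (hk : Odd k) : sign (tau n k) = 1 := by
  unfold tau
  split_ifs
  · rw [map_inv, Fin.sign_cycleRange, (Nat.Odd.sub_odd hk odd_one).neg_one_pow, inv_one]
  · exact map_one _

/-- For odd `n ≥ 3`, the permutations `τ_3, τ_5, …, τ_n` generate the alternating group. -/
theorem closure_tau_eq_alternating (n : ℕ) (hodd : Odd n) (h3 : 3 ≤ n) :
    Subgroup.closure {σ : Equiv.Perm (Fin n) | ∃ k, Odd k ∧ 3 ≤ k ∧ k ≤ n ∧ σ = tau n k} =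
      alternatingGroup (Fin n) := by
  obtain ⟨m, rfl⟩ : ∃ m, n = m + 3 := ⟨n - 3, by omega⟩
  set T := {σ : Perm (Fin (m + 3)) | ∃ k, Odd k ∧ 3 ≤ k ∧ k ≤ m + 3 ∧ σ = tau (m + 3) k}
  have hσ : finRotate (m + 3) ∈ closure T := by
    simpa using inv_mem (subset_closure
      ⟨m + 3, hodd, by omega, le_rfl, (tau_self_eq_inv_finRotate (m + 2)).symm⟩ : _ ∈ closure T)
  have hc : Fin.cycleRange 2 ∈ closure T := by
    simpa using inv_mem (subset_closure ⟨3, by decide, le_rfl, by omega, (tau_three m).symm⟩ :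
      _ ∈ closure T)
  have hsign : sign (finRotate (m + 3)) = 1 := by
    rw [sign_finRotate, (Nat.Odd.sub_odd hodd odd_one).neg_one_pow]
  have htop := closure_cycle_adjacent_swap (isCycle_finRotate (n := m + 1)) support_finRotate 0
  rw [finRotate_apply_zero] at htop
  refine le_antisymm (closure_le _ |>.2 ?_) ?_
  · rintro _ ⟨k, hk, -, -, rfl⟩
    exact sign_tau_of_odd hk
  · rw [← closure_pair_conj_swap_eq_alternatingGroup hsign (swap_isSwap_iff.2 Fin.zero_ne_one)
      htop, Fin.swap_zero_one_mul_finRotate_mul_swap, closure_le, Set.insert_subset_iff,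
      Set.singleton_subset_iff]
    exact ⟨hσ, mul_mem hc hσ⟩
end

section
/- For every n ≥ 3 there exists an acyclic hypergraph with vertex set the set [n]^(2) of ordered pairs of distinct elements of {1,…,n}, whose hyperedges are all triangles T(a,b,c) = {(a,b),(b,c),(c,a)} for suitable triples (a,b,c) of distinct elements, and which has exactly two connected components: one whose vertex set is exactly {(3,2),(2,1),(1,3)}, and one containing all other vertices. -/
/-- `PairsSet n` is `[n]^(2)`, the set of ordered pairs of distinct elements of `{1,…,n}`. -/
def PairsSet (n : ℕ) : Set (ℕ × ℕ) :=
  {p | p.1 ≠ p.2 ∧ 1 ≤ p.1 ∧ p.1 ≤ n ∧ 1 ≤ p.2 ∧ p.2 ≤ n}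

/-- The triangle `T(a,b,c) = {(a,b),(b,c),(c,a)}`. -/
def Tset (a b c : ℕ) : Set (ℕ × ℕ) := {(a, b), (b, c), (c, a)}

/-- `h` is a triangle `T(a,b,c)` for some triple of distinct elements of `{1,…,n}`. -/
def IsTriangle (n : ℕ) (h : Set (ℕ × ℕ)) : Prop :=
  ∃ a b c : ℕ, a ≠ b ∧ b ≠ c ∧ a ≠ c ∧ 1 ≤ a ∧ a ≤ n ∧ 1 ≤ b ∧ b ≤ n ∧ 1 ≤ c ∧ c ≤ n ∧
    h = Tset a b c

/-- The bipartite incidence graph of a hypergraph with vertex set `V` and hyperedge set `H`: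
vertices on one side, hyperedges on the other, adjacency given by membership. -/
def incGraph (V : Set (ℕ × ℕ)) (H : Set (Set (ℕ × ℕ))) : SimpleGraph (↥V ⊕ ↥H) where
  Adj x y :=
    (∃ v h, x = Sum.inl v ∧ y = Sum.inr h ∧ (v : ℕ × ℕ) ∈ (h : Set (ℕ × ℕ))) ∨
    (∃ v h, y = Sum.inl v ∧ x = Sum.inr h ∧ (v : ℕ × ℕ) ∈ (h : Set (ℕ × ℕ)))
  symm := by
    constructor
    rintro x y (⟨v, h, rfl, rfl, hm⟩ | ⟨v, h, rfl, rfl, hm⟩)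
    · exact Or.inr ⟨v, h, rfl, rfl, hm⟩
    · exact Or.inl ⟨v, h, rfl, rfl, hm⟩
  loopless := by constructor; rintro x (⟨v, h, rfl, hy, -⟩ | ⟨v, h, hy, rfl, -⟩) <;> simp at hy

/-- The hypergraph `(V, H)` is acyclic and has exactly two connected components, one whose
set of (pair-)vertices is exactly the three vertices of `T(3,2,1)` and one containing all
other vertices. -/
def TwoComponents321 (V : Set (ℕ × ℕ)) (H : Set (Set (ℕ × ℕ))) : Prop :=
  ∃ c₁ c₂ : (incGraph V H).ConnectedComponent, c₁ ≠ c₂ ∧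
    (∀ x, (incGraph V H).connectedComponentMk x = c₁ ∨
          (incGraph V H).connectedComponentMk x = c₂) ∧
    (∀ v : ↥V, (incGraph V H).connectedComponentMk (Sum.inl v) = c₁ ↔
      (v : ℕ × ℕ) ∈ Tset 3 2 1)

/-!
Take, for `3 ≤ m ≤ n` and `1 ≤ b < m`, the triangle `T(m, b, b⁺)`, where `b ↦ b⁺` is the cyclic
successor `1 → 2 → ⋯ → m - 1 → 1`; for `m = 3` these are `T(3,2,1)` and `T(3,1,2) = T(1,2,3)`.
Give a pair `v` the level `2 max v` and a triangle of apex `m` the level `2m - 1`. The triangle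
`T(m, b, b⁺)` meets two pairs `(m, b)`, `(b⁺, m)` of level `2m` and a single lower one `(b, b⁺)`,
and as `b ↦ b⁺` permutes `{1, …, m - 1}`, each pair with maximum `m ≥ 3` lies in exactly one
triangle of apex `m`. So every node of the incidence graph has at most one lower neighbour, which
rules out cycles (consider the highest node of a cycle), and every node other than `(1,2)` and
`(2,1)` has one, so it descends to one of these two roots. No triangle but `T(3,2,1)` meets a pair
of `T(3,2,1)`, which therefore forms the whole component of `(2,1)`.
-/

open SimpleGraph

namespace SimpleGraph

variable {V : Type*} {G : SimpleGraph V}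

theorem isAcyclic_of_unique_lower_adj (f : V → ℕ) (hne : ∀ ⦃x y⦄, G.Adj x y → f x ≠ f y)
    (huniq : ∀ ⦃x y z⦄, G.Adj x y → G.Adj x z → f y < f x → f z < f x → y = z) :
    G.IsAcyclic := by
  classical
  intro v c hc
  obtain ⟨u, hu, hmax⟩ := c.support.toFinset.exists_max_image f ⟨v, by simp⟩
  rw [List.mem_toFinset] at hu
  set c' := c.rotate u hu
  have hc' : c'.IsCycle := hc.rotate hu
  have lower : ∀ w ∈ c'.support, G.Adj u w → f w < f u := fun w hw huw =>
    (hmax w (by simpa [c'] using hw)).lt_of_ne (hne huw).symm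
  have hsnd := c'.adj_snd hc'.not_nil
  have hpen := (c'.adj_penultimate hc'.not_nil).symm
  exact hc'.snd_ne_penultimate <| huniq hsnd hpen
    (lower _ (c'.getVert_mem_support _) hsnd) (lower _ (c'.getVert_mem_support _) hpen)

theorem exists_reachable_of_exists_lower_adj (f : V → ℕ) {R : Set V}
    (h : ∀ x ∉ R, ∃ y, G.Adj x y ∧ f y < f x) (x : V) : ∃ r ∈ R, G.Reachable x r := by
  induction hx : f x using Nat.strong_induction_on generalizing x with
  | _ k ih =>
    by_cases hxR : x ∈ R
    · exact ⟨x, hxR, .rfl⟩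
    obtain ⟨y, hxy, hlt⟩ := h x hxR
    obtain ⟨r, hr, hyr⟩ := ih (f y) (hx ▸ hlt) y rfl
    exact ⟨r, hr, hxy.reachable.trans hyr⟩

theorem Reachable.mem_of_forall_adj_mem {S : Set V} (hS : ∀ x ∈ S, ∀ y, G.Adj x y → y ∈ S)
    {x y : V} (hxy : G.Reachable x y) (hx : x ∈ S) : y ∈ S := by
  obtain ⟨p⟩ := hxy
  induction p with
  | nil => exact hx
  | cons h _ ih => exact ih (hS _ hx _ h)

end SimpleGraph

section Incidence

variable {V : Set (ℕ × ℕ)} {H : Set (Set (ℕ × ℕ))}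

@[simp] lemma incGraph_adj_inl_inr {v : V} {h : H} :
    (incGraph V H).Adj (.inl v) (.inr h) ↔ (v : ℕ × ℕ) ∈ (h : Set (ℕ × ℕ)) := by
  refine ⟨?_, fun hm => .inl ⟨v, h, rfl, rfl, hm⟩⟩
  rintro (⟨w, k, ⟨⟩, ⟨⟩, hm⟩ | ⟨w, k, ⟨⟩, -, -⟩)
  exact hm

@[simp] lemma incGraph_adj_inr_inl {v : V} {h : H} :
    (incGraph V H).Adj (.inr h) (.inl v) ↔ (v : ℕ × ℕ) ∈ (h : Set (ℕ × ℕ)) :=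
  (incGraph V H).adj_comm _ _ |>.trans incGraph_adj_inl_inr

@[simp] lemma not_incGraph_adj_inl_inl {v w : V} : ¬ (incGraph V H).Adj (.inl v) (.inl w) := by
  simp [incGraph]

@[simp] lemma not_incGraph_adj_inr_inr {h k : H} : ¬ (incGraph V H).Adj (.inr h) (.inr k) := by
  simp [incGraph]

theorem incGraph_isAcyclic_of_level (f : ℕ × ℕ → ℕ) (g : Set (ℕ × ℕ) → ℕ)
    (hne : ∀ v ∈ V, ∀ h ∈ H, v ∈ h → f v ≠ g h)
    (hvert : ∀ v ∈ V, ∀ h ∈ H, ∀ h' ∈ H, v ∈ h → v ∈ h' → g h < f v → g h' < f v → h = h')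
    (hedge : ∀ h ∈ H, ∀ v ∈ V, ∀ v' ∈ V, v ∈ h → v' ∈ h → f v < g h → f v' < g h → v = v') :
    (incGraph V H).IsAcyclic := by
  refine isAcyclic_of_unique_lower_adj (Sum.elim (f ∘ (↑)) (g ∘ (↑))) ?_ ?_
  · rintro (⟨v, hv⟩ | ⟨h, hh⟩) (⟨w, hw⟩ | ⟨k, hk⟩) hadj
    · exact absurd hadj not_incGraph_adj_inl_inl
    · exact hne v hv k hk (incGraph_adj_inl_inr.1 hadj)
    · exact (hne w hw h hh (incGraph_adj_inr_inl.1 hadj)).symm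
    · exact absurd hadj not_incGraph_adj_inr_inr
  · rintro (⟨v, hv⟩ | ⟨h, hh⟩) (⟨w, hw⟩ | ⟨k, hk⟩) (⟨w', hw'⟩ | ⟨k', hk'⟩) hy hz hly hlz <;>
      simp only [incGraph_adj_inl_inr, incGraph_adj_inr_inl, not_incGraph_adj_inl_inl,
        not_incGraph_adj_inr_inr, Sum.elim_inl, Sum.elim_inr, Function.comp_apply, Sum.inl.injEq,
        Sum.inr.injEq, Subtype.mk.injEq] at hy hz hly hlz ⊢
    · exact hvert v hv k hk k' hk' hy hz hly hlz
    · exact hedge h hh w hw w' hw' hy hz hly hlz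

end Incidence

lemma mem_Tset {v : ℕ × ℕ} {a b c : ℕ} :
    v ∈ Tset a b c ↔ v = (a, b) ∨ v = (b, c) ∨ v = (c, a) := Iff.rfl

def cycSucc (m b : ℕ) : ℕ := if b + 1 = m then 1 else b + 1

lemma cycSucc_bijOn (m : ℕ) : Set.BijOn (cycSucc m) (Set.Ico 1 m) (Set.Ico 1 m) := by
  refine ⟨fun b hb => ?_, fun b hb b' hb' h => ?_, fun c hc => ?_⟩
  · simp only [Set.mem_Ico, cycSucc] at hb ⊢; split_ifs <;> omega
  · simp only [Set.mem_Ico, cycSucc] at hb hb' h; split_ifs at h <;> omega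
  · simp only [Set.mem_Ico] at hc
    refine ⟨if c = 1 then m - 1 else c - 1, ?_, ?_⟩
    · simp only [Set.mem_Ico]; split_ifs <;> omega
    · simp only [cycSucc]; split_ifs <;> omega

lemma cycSucc_ne {m : ℕ} (hm : 3 ≤ m) (b : ℕ) : cycSucc m b ≠ b := by
  simp only [cycSucc]; split_ifs <;> omega

def cycTri (m b : ℕ) : Set (ℕ × ℕ) := Tset m b (cycSucc m b)

def cycTriangles (n : ℕ) : Set (Set (ℕ × ℕ)) :=
  {h | ∃ m b, 3 ≤ m ∧ m ≤ n ∧ b ∈ Set.Ico 1 m ∧ h = cycTri m b}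

lemma cycTri_three_two : cycTri 3 2 = Tset 3 2 1 := rfl

noncomputable def apex (h : Set (ℕ × ℕ)) : ℕ := sSup (Prod.fst '' h)

lemma apex_cycTri {m b : ℕ} (hb : b ∈ Set.Ico 1 m) : apex (cycTri m b) = m := by
  have hc := (cycSucc_bijOn m).mapsTo hb
  simp only [Set.mem_Ico] at hb hc
  refine IsGreatest.csSup_eq ⟨⟨(m, b), .inl rfl, rfl⟩, ?_⟩
  rintro _ ⟨v, hv | hv | hv, rfl⟩ <;> (obtain rfl := hv; simp only; omega)

lemma max_le_of_mem_cycTri {m b : ℕ} {v : ℕ × ℕ} (hb : b ∈ Set.Ico 1 m) (hv : v ∈ cycTri m b) :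
    max v.1 v.2 ≤ m := by
  have hc := (cycSucc_bijOn m).mapsTo hb
  simp only [Set.mem_Ico] at hb hc
  rcases hv with rfl | rfl | rfl <;> simp only <;> omega

lemma eq_of_mem_cycTri_of_max_lt {m b : ℕ} {v : ℕ × ℕ} (hv : v ∈ cycTri m b)
    (hlt : max v.1 v.2 < m) : v = (b, cycSucc m b) := by
  rcases hv with rfl | rfl | rfl <;> simp only at hlt ⊢ <;> omega

lemma eq_of_mem_cycTri_of_max_eq {m b b' : ℕ} {v : ℕ × ℕ} (hb : b ∈ Set.Ico 1 m)
    (hb' : b' ∈ Set.Ico 1 m) (hv : v ∈ cycTri m b) (hv' : v ∈ cycTri m b')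
    (hm : max v.1 v.2 = m) : b = b' := by
  have hc := (cycSucc_bijOn m).mapsTo hb
  have hc' := (cycSucc_bijOn m).mapsTo hb'
  have hbm := hb.2
  have hbm' := hb'.2
  simp only [Set.mem_Ico] at hc hc'
  rw [cycTri, mem_Tset] at hv hv'
  rcases hv with rfl | rfl | rfl <;> rcases hv' with h | h | h <;>
    simp only [Prod.ext_iff] at h hm <;> try omega
  exact (cycSucc_bijOn m).injOn hb hb' h.1

lemma exists_mem_cycTri {v : ℕ × ℕ} (hne : v.1 ≠ v.2) (h1 : 1 ≤ v.1) (h2 : 1 ≤ v.2) :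
    ∃ b ∈ Set.Ico 1 (max v.1 v.2), v ∈ cycTri (max v.1 v.2) b := by
  obtain ⟨a, c⟩ := v
  simp only at hne h1 h2 ⊢
  rcases Nat.lt_or_gt_of_ne hne with hlt | hlt
  · obtain ⟨b, hb, hbc⟩ := (cycSucc_bijOn c).surjOn (show a ∈ Set.Ico 1 c from ⟨h1, hlt⟩)
    rw [max_eq_right hlt.le]
    exact ⟨b, hb, .inr (.inr (by rw [hbc]; rfl))⟩
  · rw [max_eq_left hlt.le]
    exact ⟨c, ⟨h2, hlt⟩, .inl rfl⟩

lemma mem_pairsSet_of_mem_cycTri {n m b : ℕ} {v : ℕ × ℕ} (hm : 3 ≤ m) (hmn : m ≤ n)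
    (hb : b ∈ Set.Ico 1 m) (hv : v ∈ cycTri m b) : v ∈ PairsSet n := by
  have hc := (cycSucc_bijOn m).mapsTo hb
  have hne := cycSucc_ne hm b
  simp only [Set.mem_Ico] at hb hc
  rcases hv with rfl | rfl | rfl <;> simp only [PairsSet, Set.mem_ofPred_eq] <;> omega

lemma isTriangle_of_mem_cycTriangles {n : ℕ} {h : Set (ℕ × ℕ)} (hh : h ∈ cycTriangles n) :
    IsTriangle n h := by
  obtain ⟨m, b, hm, hmn, hb, rfl⟩ := hh
  have hc := (cycSucc_bijOn m).mapsTo hb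
  have hne := cycSucc_ne hm b
  simp only [Set.mem_Ico] at hb hc
  exact ⟨m, b, cycSucc m b, by omega, by omega, by omega, by omega, hmn, hb.1, by omega, hc.1,
    by omega, rfl⟩

lemma eq_three_two_of_mem_cycTri {m b : ℕ} {v : ℕ × ℕ} (hm : 3 ≤ m) (hb : b ∈ Set.Ico 1 m)
    (hv : v ∈ cycTri m b) (hv₀ : v ∈ Tset 3 2 1) : m = 3 ∧ b = 2 := by
  simp only [Set.mem_Ico] at hb
  rw [cycTri, mem_Tset, cycSucc] at hv
  split_ifs at hv <;> rcases hv₀ with rfl | rfl | rfl <;> rcases hv with h | h | h <;>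
    simp only [Prod.ext_iff] at h <;> exact ⟨by omega, by omega⟩

lemma cycTriangles_isAcyclic (n : ℕ) : (incGraph (PairsSet n) (cycTriangles n)).IsAcyclic := by
  refine incGraph_isAcyclic_of_level (fun v => 2 * max v.1 v.2) (fun h => 2 * apex h - 1)
    ?_ ?_ ?_
  · rintro v - _ ⟨m, b, hm, -, hb, rfl⟩ -
    rw [apex_cycTri hb]
    omega
  · rintro v - _ ⟨m, b, -, -, hb, rfl⟩ _ ⟨m', b', -, -, hb', rfl⟩ hv hv' hlt hlt'
    simp only [apex_cycTri hb, apex_cycTri hb'] at hlt hlt'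
    have := max_le_of_mem_cycTri hb hv
    have := max_le_of_mem_cycTri hb' hv'
    obtain rfl : m' = m := by omega
    rw [eq_of_mem_cycTri_of_max_eq hb hb' hv hv' (by omega)]
  · rintro _ ⟨m, b, -, -, hb, rfl⟩ v - v' - hv hv' hlt hlt'
    simp only [apex_cycTri hb] at hlt hlt'
    rw [eq_of_mem_cycTri_of_max_lt hv (by omega), eq_of_mem_cycTri_of_max_lt hv' (by omega)]

lemma exists_reachable_inl_of_max_le_two (n : ℕ) (x : ↥(PairsSet n) ⊕ ↥(cycTriangles n)) :
    ∃ v : ↥(PairsSet n), max v.1.1 v.1.2 ≤ 2 ∧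
      (incGraph (PairsSet n) (cycTriangles n)).Reachable x (.inl v) := by
  let R := {x : ↥(PairsSet n) ⊕ ↥(cycTriangles n) | ∃ v, max v.1.1 v.1.2 ≤ 2 ∧ x = .inl v}
  let level : ↥(PairsSet n) ⊕ ↥(cycTriangles n) → ℕ :=
    Sum.elim (fun v => 2 * max v.1.1 v.1.2) (fun h => 2 * apex h.1 - 1)
  have hlower : ∀ x ∉ R, ∃ y, (incGraph (PairsSet n) (cycTriangles n)).Adj x y ∧
      level y < level x := by
    rintro (⟨v, hne, h1, hn1, h2, hn2⟩ | ⟨_, m, b, hm, hmn, hb, rfl⟩) hx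
    · have hv3 : 3 ≤ max v.1 v.2 := by
        by_contra! hlt
        exact hx ⟨⟨v, hne, h1, hn1, h2, hn2⟩, show max v.1 v.2 ≤ 2 by omega, rfl⟩
      obtain ⟨b, hb, hvb⟩ := exists_mem_cycTri hne h1 h2
      refine ⟨.inr ⟨cycTri _ b, _, b, hv3, max_le hn1 hn2, hb, rfl⟩,
        incGraph_adj_inl_inr.2 hvb, ?_⟩
      simp only [level, Sum.elim_inl, Sum.elim_inr, apex_cycTri hb]
      omega
    · have hc := (cycSucc_bijOn m).mapsTo hb
      have hv := mem_pairsSet_of_mem_cycTri hm hmn hb (.inr (.inl rfl))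
      simp only [Set.mem_Ico] at hb hc
      refine ⟨.inl ⟨(b, cycSucc m b), hv⟩, incGraph_adj_inr_inl.2 (.inr (.inl rfl)), ?_⟩
      simp only [level, Sum.elim_inl, Sum.elim_inr, apex_cycTri hb]
      omega
  obtain ⟨_, ⟨v, hv, rfl⟩, hxv⟩ := exists_reachable_of_exists_lower_adj level hlower x
  exact ⟨v, hv, hxv⟩

lemma mem_tset_three_two_one_of_reachable {n : ℕ} {v w : ↥(PairsSet n)}
    (h : (incGraph (PairsSet n) (cycTriangles n)).Reachable (.inl v) (.inl w))
    (hv : v.1 ∈ Tset 3 2 1) : w.1 ∈ Tset 3 2 1 := by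
  let S : Set (↥(PairsSet n) ⊕ ↥(cycTriangles n)) :=
    Sum.elim (fun v => v.1 ∈ Tset 3 2 1) (fun h => h.1 = Tset 3 2 1)
  refine h.mem_of_forall_adj_mem (S := S) ?_ hv
  rintro (v | h) hx (w | ⟨k, hk⟩) hadj
  · exact absurd hadj not_incGraph_adj_inl_inl
  · have hvk : v.1 ∈ k := incGraph_adj_inl_inr.1 hadj
    obtain ⟨m, b, hm, -, hb, rfl⟩ := hk
    obtain ⟨rfl, rfl⟩ := eq_three_two_of_mem_cycTri hm hb hvk hx
    exact cycTri_three_two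
  · change h.1 = Tset 3 2 1 at hx
    exact show w.1 ∈ Tset 3 2 1 from hx ▸ incGraph_adj_inr_inl.1 hadj
  · exact absurd hadj not_incGraph_adj_inr_inr

lemma eq_or_eq_of_mem_pairsSet_of_max_le_two {n : ℕ} {v : ℕ × ℕ} (hv : v ∈ PairsSet n)
    (h2 : max v.1 v.2 ≤ 2) : v = (2, 1) ∨ v = (1, 2) := by
  obtain ⟨a, b⟩ := v
  obtain ⟨hne, ha, -, hb, -⟩ := hv
  simp only [Prod.mk.injEq] at hne h2 ⊢
  omega

lemma twoComponents321_cycTriangles {n : ℕ} (hn : 3 ≤ n) :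
    TwoComponents321 (PairsSet n) (cycTriangles n) := by
  set G := incGraph (PairsSet n) (cycTriangles n)
  have h321 : Tset 3 2 1 ∈ cycTriangles n := ⟨3, 2, le_rfl, hn, ⟨by norm_num, by norm_num⟩, rfl⟩
  let r₁ : ↥(PairsSet n) := ⟨(2, 1), by simp only [PairsSet, Set.mem_ofPred_eq]; omega⟩
  let r₂ : ↥(PairsSet n) := ⟨(1, 2), by simp only [PairsSet, Set.mem_ofPred_eq]; omega⟩
  have hr₁ : r₁.1 ∈ Tset 3 2 1 := .inr (.inl rfl)
  refine ⟨G.connectedComponentMk (.inl r₁), G.connectedComponentMk (.inl r₂), fun h => ?_,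
    fun x => ?_, fun v => ⟨fun h => ?_, fun hv => ?_⟩⟩
  · have := mem_tset_three_two_one_of_reachable (ConnectedComponent.exact h) hr₁
    simp [r₂, mem_Tset] at this
  · obtain ⟨v, hv, hxv⟩ := exists_reachable_inl_of_max_le_two n x
    rcases eq_or_eq_of_mem_pairsSet_of_max_le_two v.2 hv with h | h
    · exact .inl (ConnectedComponent.sound (by rwa [show v = r₁ from Subtype.ext h] at hxv))
    · exact .inr (ConnectedComponent.sound (by rwa [show v = r₂ from Subtype.ext h] at hxv))
  · exact mem_tset_three_two_one_of_reachable (ConnectedComponent.exact h).symm hr₁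
  · exact ConnectedComponent.sound <|
      (incGraph_adj_inl_inr (h := ⟨_, h321⟩).2 hv).reachable.trans
      (incGraph_adj_inr_inl.2 hr₁).reachable

/-- For every `n ≥ 3` there is an acyclic hypergraph with vertex set `[n]^(2)`, all of
whose hyperedges are triangles `T(a,b,c)`, having exactly two connected components: one
whose pair-vertices are exactly the three vertices of `T(3,2,1)`, and one containing all
other vertices. -/
theorem exists_triangle_hypergraph (n : ℕ) (hn : 3 ≤ n) :
    ∃ H : Set (Set (ℕ × ℕ)),
      (∀ h ∈ H, IsTriangle n h) ∧
      (incGraph (PairsSet n) H).IsAcyclic ∧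
      TwoComponents321 (PairsSet n) H :=
  ⟨cycTriangles n, fun _ => isTriangle_of_mem_cycTriangles, cycTriangles_isAcyclic n,
    twoComponents321_cycTriangles hn⟩
end

section
/- (Rankin's theorem) Let G be a finite group generated by two elements a, b, and let Γ be the directed Cayley graph of G with generators a and b. If the order of a b^{-1} is odd and |G|/ord(a) is even, then Γ has no directed Hamiltonian cycle. -/
/-!
A directed Hamiltonian cycle is a permutation `σ` of `G` forming one cycle of length `|G|`, and
`|G| = ord(a) · (|G| / ord(a))` is even, so `sign σ = -1`. On the other hand
`π = ρ(a⁻¹) ∘ σ` (with `ρ` right multiplication) sends each `g` either to `g` or to `g c`,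
`c = b a⁻¹`; such a `π` satisfies `π ^ ord(c) = 1`, and `ord(c) = ord(a b⁻¹)` is odd, so
`sign π = 1`. Finally `ρ(a⁻¹)` acts on each of the `|G| / ord(a)` left cosets of `⟨a⟩` by the same
permutation, so its sign is an even power of a unit, i.e. `1`. Hence `sign σ = sign π = 1`.
-/

open Equiv Equiv.Perm Subgroup

namespace Subgroup

variable {G : Type*} [Group G] (H : Subgroup G)

theorem inv_out_mul_mem (g : G) : (Quotient.out (g : G ⧸ H))⁻¹ * g ∈ H :=
  QuotientGroup.eq.mp (QuotientGroup.out_eq' _)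

/-- An explicit form of `Subgroup.groupEquivQuotientProdSubgroup`, under which right
multiplication by an element of `H` only acts on the second factor. -/
noncomputable def equivQuotientProd : G ≃ (G ⧸ H) × H where
  toFun g := (g, ⟨_, H.inv_out_mul_mem g⟩)
  invFun p := Quotient.out p.1 * p.2
  left_inv g := by simp
  right_inv := fun ⟨q, x⟩ => by
    have hq : ((Quotient.out q * x : G) : G ⧸ H) = q := by
      rw [QuotientGroup.mk_mul_of_mem _ x.2, QuotientGroup.out_eq']
    ext
    · exact hq
    · simp [hq]

theorem equivQuotientProd_permCongr_mulRight {h : G} (hh : h ∈ H) :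
    H.equivQuotientProd.permCongr (Equiv.mulRight h) =
      prodCongrRight fun _ => Equiv.mulRight ⟨h, hh⟩ := by
  ext ⟨q, x⟩ <;>
  have hq : ((Quotient.out q * x * h : G) : G ⧸ H) = q := by
    rw [mul_assoc, QuotientGroup.mk_mul_of_mem _ (H.mul_mem x.2 hh), QuotientGroup.out_eq']
  · exact hq
  · show (Quotient.out ((Quotient.out q * x * h : G) : G ⧸ H))⁻¹ * (Quotient.out q * x * h)
      = x * h
    rw [hq]
    group

theorem sign_mulRight_of_even_index [Fintype G] [DecidableEq G] (hH : Even H.index) {h : G}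
    (hh : h ∈ H) : sign (Equiv.mulRight h) = 1 := by
  classical
  let _ : Fintype (G ⧸ H) := Fintype.ofFinite _
  obtain ⟨k, hk⟩ := hH
  rw [← sign_permCongr H.equivQuotientProd, equivQuotientProd_permCongr_mulRight H hh,
    sign_prodCongrRight, Finset.prod_const, Finset.card_univ, ← Nat.card_eq_fintype_card,
    ← index_eq_card, hk, ← two_mul, pow_mul, Int.units_sq, one_pow]

end Subgroup

namespace Equiv.Perm

section

variable {G : Type*} [Group G] {π : Perm G} {c : G}

theorem apply_mul_ne_of_forall_apply_eq_or_eq_mul (hπ : ∀ g, π g = g ∨ π g = g * c) {g : G}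
    (hg : π g ≠ g) : π (g * c) ≠ g * c := by
  rw [← (hπ g).resolve_left hg]
  exact fun h => hg (π.injective h)

theorem pow_apply_of_forall_apply_eq_or_eq_mul (hπ : ∀ g, π g = g ∨ π g = g * c) (n : ℕ)
    {g : G} (hg : π g ≠ g) : (π ^ n) g = g * c ^ n := by
  induction n generalizing g with
  | zero => simp
  | succ n ih =>
    rw [pow_succ, mul_apply, (hπ g).resolve_left hg,
      ih (apply_mul_ne_of_forall_apply_eq_or_eq_mul hπ hg), mul_assoc, ← pow_succ']

theorem pow_orderOf_eq_one_of_forall_apply_eq_or_eq_mul (hπ : ∀ g, π g = g ∨ π g = g * c) :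
    π ^ orderOf c = 1 := by
  ext g
  by_cases hg : π g = g
  · rw [pow_apply_eq_self_of_apply_eq_self hg, one_apply]
  · rw [pow_apply_of_forall_apply_eq_or_eq_mul hπ _ hg, pow_orderOf_eq_one, mul_one, one_apply]

theorem sign_eq_one_of_forall_apply_eq_or_eq_mul [Fintype G] [DecidableEq G]
    (hπ : ∀ g, π g = g ∨ π g = g * c) (hc : Odd (orderOf c)) : sign π = 1 := by
  rw [← pow_one (sign π), ← Nat.odd_iff.mp hc, ← Int.units_pow_eq_pow_mod_two, ← map_pow,
    pow_orderOf_eq_one_of_forall_apply_eq_or_eq_mul hπ, map_one]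

end

variable {α : Type*} [Nontrivial α] {σ : Perm α}

theorem apply_ne_self_of_forall_sameCycle (h : ∀ x y, σ.SameCycle x y) (x : α) : σ x ≠ x := by
  obtain ⟨y, hy⟩ := exists_ne x
  exact fun hx => hy ((h x y).eq_of_left hx).symm

theorem sign_of_forall_sameCycle [Fintype α] [DecidableEq α] (h : ∀ x y, σ.SameCycle x y) :
    sign σ = -(-1) ^ Fintype.card α := by
  have hmoved := apply_ne_self_of_forall_sameCycle h
  have hcycle : σ.IsCycle := ⟨Classical.arbitrary α, hmoved _, fun y _ => h _ y⟩
  have hsupport : σ.support = Finset.univ :=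
    Finset.eq_univ_of_forall fun x => mem_support.2 (hmoved x)
  rw [hcycle.sign, hsupport, Finset.card_univ]

end Equiv.Perm

theorem rankin_general (G : Type*) [Group G] [Fintype G] (a b : G)
    (hodd : Odd (orderOf (a * b⁻¹)))
    (heven : Even (Fintype.card G / orderOf a)) :
    ¬ ∃ σ : Equiv.Perm G,
        (∀ g : G, σ g = g * a ∨ σ g = g * b) ∧ ∀ g h : G, ∃ m : ℕ, (σ ^ m) g = h := by
  classical
  rintro ⟨σ, hstep, hreach⟩
  have hindex : (zpowers a).index = Fintype.card G / orderOf a := by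
    rw [← Nat.card_zpowers, ← Nat.card_eq_fintype_card, ← index_mul_card, Nat.mul_div_cancel]
    exact Nat.card_pos
  have hcard : Even (Fintype.card G) := by
    rw [← Nat.div_mul_cancel orderOf_dvd_card]
    exact heven.mul_right _
  have : Nontrivial G := by
    obtain ⟨k, hk⟩ := hcard
    have := Fintype.card_pos (α := G)
    exact Fintype.one_lt_card_iff_nontrivial.mp (by omega)
  set π := Equiv.mulRight a⁻¹ * σ
  have hπ : ∀ g, π g = g ∨ π g = g * (b * a⁻¹) := fun g => by
    rcases hstep g with h | h <;> simp [π, h, mul_assoc]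
  have hπsign : sign π = 1 := sign_eq_one_of_forall_apply_eq_or_eq_mul hπ
    (by rwa [← orderOf_inv, mul_inv_rev, inv_inv])
  have hσsign : sign σ = -1 := by
    rw [sign_of_forall_sameCycle fun g h => ?_, hcard.neg_one_pow]
    obtain ⟨m, hm⟩ := hreach g h
    exact ⟨m, by rwa [zpow_natCast]⟩
  have : sign π = -1 := by
    rw [map_mul, sign_mulRight_of_even_index _ (hindex ▸ heven) (inv_mem (mem_zpowers a)),
      hσsign, one_mul]
  exact absurd (hπsign.symm.trans this) (by decide)

/-- **Rankin's theorem.** Let `G` be a finite group generated by `a` and `b`.  If the order of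
`a b⁻¹` is odd and `|G| / ord(a)` is even, then the directed Cayley graph of `G` with
generators `a, b` has no directed Hamiltonian cycle.  A directed Hamiltonian cycle is
encoded by a permutation `σ` of the vertex set `G` (the successor map) such that every step
follows a directed edge (`σ g ∈ {g * a, g * b}`) and iterating `σ` from any vertex reaches
every vertex (so `σ` is a single cycle through all of `G`). -/
theorem rankin (G : Type*) [Group G] [Fintype G] (a b : G)
    (hgen : Subgroup.closure ({a, b} : Set G) = ⊤)
    (hodd : Odd (orderOf (a * b⁻¹)))
    (heven : Even (Fintype.card G / orderOf a)) :
    ¬ ∃ σ : Equiv.Perm G,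
        (∀ g : G, σ g = g * a ∨ σ g = g * b) ∧ ∀ g h : G, ∃ m : ℕ, (σ ^ m) g = h :=
  rankin_general G a b hodd heven
end

section
/- Let n ≥ 3 be odd, and consider any directed Hamiltonian cycle of the Cayley graph of A_n with generators τ_3, τ_5, …, τ_n. For every i ∈ {1,…,n} there exists a permutation π ∈ A_n with π(n) = i whose outgoing edge in the cycle is labelled τ_n. -/
/-! If no vertex `π` with `π(n) = i` left the cycle along `τ_n`, then, since every other
generator fixes position `n`, the cycle could never leave the fibre `{π | π(n) = i}`.
But `A_n` acts transitively on `{1, …, n}` for `n ≥ 3`, so this fibre is a nonempty proper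
subset of the vertices, contradicting that the cycle passes through every vertex. -/

lemma tau_apply_of_le {n k : ℕ} {j : Fin n} (hkj : k ≤ j) : tau n k j = j := by
  unfold tau
  split_ifs with hk
  · rw [Equiv.Perm.inv_eq_iff_eq]
    have : NeZero n := ⟨by omega⟩
    rcases (show k - 1 < (j : ℕ) ∨ k - 1 = j by omega) with hlt | heq
    · exact (Fin.cycleRange_of_gt (Fin.mk_lt_of_lt_val hlt)).symm
    · obtain rfl : (⟨k - 1, hk⟩ : Fin n) = j := Fin.ext heq
      rw [Fin.cycleRange_self, Fin.ext_iff, Fin.val_zero]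
      simp only at hkj ⊢
      omega
  · rfl

lemma Equiv.Perm.mem_of_mapsTo_of_pow_apply_eq {α : Type*} {σ : Equiv.Perm α} {S : Set α}
    (hS : Set.MapsTo σ S S) {a b : α} (ha : a ∈ S) {m : ℕ} (hab : (σ ^ m) a = b) : b ∈ S := by
  rw [← hab, Equiv.Perm.coe_pow]
  exact hS.iterate m ha

lemma mapsTo_fiber_of_ne_mul_tau {n : ℕ} (hn : 0 < n) {G : Subgroup (Equiv.Perm (Fin n))}
    {σ : Equiv.Perm G} (hstep : ∀ g : G, ∃ k ≤ n, (σ g : Equiv.Perm (Fin n)) = g * tau n k)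
    {i : Fin n}
    (hno : ∀ π : G, (π : Equiv.Perm (Fin n)) ⟨n - 1, by omega⟩ = i →
      (σ π : Equiv.Perm (Fin n)) ≠ π * tau n n) :
    Set.MapsTo σ {π : G | (π : Equiv.Perm (Fin n)) ⟨n - 1, by omega⟩ = i}
      {π : G | (π : Equiv.Perm (Fin n)) ⟨n - 1, by omega⟩ = i} := by
  intro π hπ
  obtain ⟨k, hkn, hk⟩ := hstep π
  have hk_lt : k < n := lt_of_le_of_ne hkn fun h => hno π hπ (h ▸ hk)
  simp only [Set.mem_ofPred_eq, hk, Equiv.Perm.mul_apply]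
  rwa [tau_apply_of_le (by simp only; omega)]

/-- For odd `n ≥ 3` and any directed Hamiltonian cycle of the Cayley graph of `A_n` with
generators `τ_3, τ_5, …, τ_n` (encoded by its successor permutation `σ`), for every
`i ∈ {1,…,n}` there is a vertex `π` with `π(n) = i` whose outgoing edge in the cycle is
labelled `τ_n`.  Position `n` is the last index `⟨n-1, _⟩ : Fin n`. -/
theorem exists_tau_n_edge (n : ℕ) (h3 : 3 ≤ n)
    (σ : Equiv.Perm ↥(alternatingGroup (Fin n)))
    (hstep : ∀ g : ↥(alternatingGroup (Fin n)),
      ∃ k, Odd k ∧ 3 ≤ k ∧ k ≤ n ∧ (↑(σ g) : Equiv.Perm (Fin n)) = ↑g * tau n k)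
    (hham : ∀ g h : ↥(alternatingGroup (Fin n)), ∃ m : ℕ, (σ ^ m) g = h) :
    ∀ i : Fin n, ∃ π : ↥(alternatingGroup (Fin n)),
      (↑π : Equiv.Perm (Fin n)) ⟨n - 1, by omega⟩ = i ∧
      (↑(σ π) : Equiv.Perm (Fin n)) = ↑π * tau n n := by
  intro i
  by_contra! hno
  have hfiber := mapsTo_fiber_of_ne_mul_tau (by omega)
    (fun g => (hstep g).imp fun _ ⟨_, _, hkn, hk⟩ => ⟨hkn, hk⟩) hno
  have := alternatingGroup.isPretransitive_of_three_le_card (Fin n) (by simpa using h3)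
  have : Nontrivial (Fin n) := Fin.nontrivial_iff_two_le.mpr (by omega)
  obtain ⟨j, hji⟩ := exists_ne i
  obtain ⟨π, hπ⟩ := MulAction.exists_smul_eq (alternatingGroup (Fin n)) ⟨n - 1, by omega⟩ i
  obtain ⟨π', hπ'⟩ := MulAction.exists_smul_eq (alternatingGroup (Fin n)) ⟨n - 1, by omega⟩ j
  obtain ⟨m, hm⟩ := hham π π'
  exact hji (hπ' ▸ Equiv.Perm.mem_of_mapsTo_of_pow_apply_eq hfiber hπ hm)
end
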